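/- Let u be a classical 1-periodic solution of the quasi-linear surface wave equation on [0,T) and set S(t) = sup_{x∈ℝ} u_x(x,t). Then for almost every t ∈ (0,T), S is differentiable at t and, for any point ξ(t) at which u_x(·,t) attains its maximum S(t), one has S'(t) − (7/2)·ε·S(t)² = −(12/μ)·(P∗g(u(·,t)))(ξ(t)) + (12/μ)·g(u(·,t))(ξ(t)). -/

import Mathlib

/-- The 1-periodic Green's function of the operator `1 - (μ/12)∂ₓ²`. -/
noncomputable def P (μ x : ℝ) : ℝ :=
  Real.sqrt (3/μ) *
    (Real.exp (2 * Real.sqrt (3/μ) * (x - ⌊x⌋)) +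
     Real.exp (2 * Real.sqrt (3/μ) * (1 - (x - ⌊x⌋)))) /
  (Real.exp (2 * Real.sqrt (3/μ)) - 1)

/-- Periodic convolution with the kernel `P` over one period. -/
noncomputable def pconv (μ : ℝ) (h : ℝ → ℝ) (x : ℝ) : ℝ :=
  ∫ y in (0:ℝ)..1, P μ (x - y) * h y

/-- The nonlinearity `g(w) = 2w + (5/2)εw² - (1/8)ε²w³ + (3/64)ε³w⁴ - (7/48)εμ(wₓ)²`,
with the derivative `w'` supplied explicitly. -/
noncomputable def gfun (ε μ : ℝ) (w w' : ℝ → ℝ) (x : ℝ) : ℝ :=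
  2 * w x + (5/2) * ε * (w x)^2 - (1/8) * ε^2 * (w x)^3 + (3/64) * ε^3 * (w x)^4
    - (7/48) * ε * μ * (w' x)^2

/-- A classical 1-periodic solution of the quasi-linear surface wave equation
`u_t - u_x - (7/2)ε u u_x + ∂ₓ(P∗g(u)) = 0` on `ℝ × [0,T)`, recorded together with the
partial derivatives `u_x`, `u_{xx}`, `u_t`, `u_{tx}`. -/
structure QLSol (ε μ T : ℝ) where
  u : ℝ → ℝ → ℝ
  ux : ℝ → ℝ → ℝ
  uxx : ℝ → ℝ → ℝ
  ut : ℝ → ℝ → ℝ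
  utx : ℝ → ℝ → ℝ
  periodic : ∀ t ∈ Set.Ico (0:ℝ) T, Function.Periodic (fun x => u x t) 1
  hux : ∀ (x : ℝ), ∀ t ∈ Set.Ico (0:ℝ) T, HasDerivAt (fun x' => u x' t) (ux x t) x
  huxx : ∀ (x : ℝ), ∀ t ∈ Set.Ico (0:ℝ) T, HasDerivAt (fun x' => ux x' t) (uxx x t) x
  hut : ∀ (x : ℝ), ∀ t ∈ Set.Ico (0:ℝ) T,
    HasDerivWithinAt (fun t' => u x t') (ut x t) (Set.Ico (0:ℝ) T) t
  hutx : ∀ (x : ℝ), ∀ t ∈ Set.Ico (0:ℝ) T,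
    HasDerivWithinAt (fun t' => ux x t') (utx x t) (Set.Ico (0:ℝ) T) t
  contu : ContinuousOn (fun p : ℝ × ℝ => u p.1 p.2) (Set.univ ×ˢ Set.Ico (0:ℝ) T)
  contux : ContinuousOn (fun p : ℝ × ℝ => ux p.1 p.2) (Set.univ ×ˢ Set.Ico (0:ℝ) T)
  contuxx : ContinuousOn (fun p : ℝ × ℝ => uxx p.1 p.2) (Set.univ ×ˢ Set.Ico (0:ℝ) T)
  contut : ContinuousOn (fun p : ℝ × ℝ => ut p.1 p.2) (Set.univ ×ˢ Set.Ico (0:ℝ) T)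
  contutx : ContinuousOn (fun p : ℝ × ℝ => utx p.1 p.2) (Set.univ ×ˢ Set.Ico (0:ℝ) T)
  eqn : ∀ (x : ℝ), ∀ t ∈ Set.Ico (0:ℝ) T,
    ut x t - ux x t - (7/2) * ε * u x t * ux x t
      + deriv (pconv μ (gfun ε μ (fun x' => u x' t) (fun x' => ux x' t))) x = 0

/-!
On each compact subinterval of `(0,T)` the slopes `t ↦ u_x(ξ,t)`, `ξ ∈ [0,1]`, are uniformly
Lipschitz (`u_{tx}` is bounded there), and by periodicity one of them realises the supremum, so `S`
is locally Lipschitz and hence differentiable almost everywhere. At such a `t`, for a maximiser `ξ`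
of `u_x(·,t)` the function `S - u_x(ξ,·)` has a local minimum at `t`, so `S'(t) = u_{tx}(ξ,t)`, and
`u_{xx}(ξ,t) = 0`. Since `u_{tx}` is continuous, `u_{tx} = ∂ₓu_t`, which is computed by
differentiating the equation in `x`; the second derivative of `P∗g` is `(12/μ)(P∗g - g)` because
`P` is the Green's function of `1 - (μ/12)∂ₓ²`. On the window `[x-1,x]` the kernel `P(x-y)` is a
combination of `e^{±2√(3/μ)(x-y)}`, which makes this identity an explicit computation.
-/

open Real Set Filter Function MeasureTheory intervalIntegral Topology

lemma periodic_of_hasDerivAt {𝕜 F : Type*} [NontriviallyNormedField 𝕜] [NormedAddCommGroup F]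
    [NormedSpace 𝕜 F] {f f' : 𝕜 → F} {c : 𝕜} (hf : Periodic f c)
    (hd : ∀ x, HasDerivAt f (f' x) x) : Periodic f' c := fun x => by
  have := (hd (x + c)).comp_add_const x c
  rw [show (fun y => f (y + c)) = f from funext hf] at this
  exact this.unique (hd x)

lemma Function.Periodic.exists_mem_Icc_forall_le {f : ℝ → ℝ} {c : ℝ} (hf : Periodic f c)
    (hc : 0 < c) (hcont : Continuous f) : ∃ ξ ∈ Icc 0 c, ∀ x, f x ≤ f ξ := by
  obtain ⟨ξ, hξ, hmax⟩ := isCompact_Icc.exists_isMaxOn (nonempty_Icc.mpr hc.le) hcont.continuousOn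
  refine ⟨ξ, hξ, fun x => ?_⟩
  obtain ⟨y, hy, hfy⟩ := hf.exists_mem_Ico₀ hc x
  exact hfy ▸ hmax (Ico_subset_Icc_self hy)

lemma lipschitzOnWith_sSup_range {ι α : Type*} [PseudoMetricSpace α] {f : ι → α → ℝ} {A : Set ι}
    {I : Set α} {K : NNReal}
    (hmax : ∀ t ∈ I, ∃ ξ ∈ A, ∀ x, f x t ≤ f ξ t) (hlip : ∀ ξ ∈ A, LipschitzOnWith K (f ξ) I) :
    LipschitzOnWith K (fun t => sSup (range fun x => f x t)) I := by
  refine LipschitzOnWith.of_le_add_mul K fun t ht s hs => ?_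
  obtain ⟨ξ, hξ, hξmax⟩ := hmax t ht
  obtain ⟨η, -, hηmax⟩ := hmax s hs
  have hsup : sSup (range fun x => f x t) = f ξ t :=
    IsGreatest.csSup_eq ⟨mem_range_self ξ, forall_mem_range.mpr hξmax⟩
  have hle : f ξ s ≤ sSup (range fun x => f x s) :=
    le_csSup ⟨f η s, forall_mem_range.mpr hηmax⟩ (mem_range_self ξ)
  have hdist := (hlip ξ hξ).le_add_mul ht hs
  simp only [hsup]
  linarith

lemma LocallyLipschitzOn.ae_differentiableAt_of_mem {V : Type*} [NormedAddCommGroup V]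
    [NormedSpace ℝ V] [FiniteDimensional ℝ V] {f : ℝ → V} {s : Set ℝ} (hs : IsOpen s)
    [s.OrdConnected] (hf : LocallyLipschitzOn s f) : ∀ᵐ x, x ∈ s → DifferentiableAt ℝ f x := by
  have hbv : LocallyBoundedVariationOn f s := fun c d hc hd => by
    have hcd : uIcc c d ⊆ s := ‹s.OrdConnected›.uIcc_subset hc hd
    obtain ⟨K, hK⟩ := (hf.mono hcd).exists_lipschitzOnWith_of_compact isCompact_uIcc
    exact (hK.locallyBoundedVariationOn c d left_mem_uIcc right_mem_uIcc).mono
      fun x hx => ⟨Icc_subset_uIcc hx.2, hx.2⟩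
  filter_upwards [hbv.ae_differentiableWithinAt_of_mem] with x hx hxs
  exact (hx hxs).differentiableAt (hs.mem_nhds hxs)

lemma deriv_eq_of_eventually_le_of_eq {S φ : ℝ → ℝ} {t φ' : ℝ} (hS : DifferentiableAt ℝ S t)
    (hφ : HasDerivAt φ φ' t) (hle : ∀ᶠ s in 𝓝 t, φ s ≤ S s) (heq : φ t = S t) :
    deriv S t = φ' := by
  have hmin : IsLocalMin (fun s => S s - φ s) t := hle.mono fun s hs => by
    simp only [heq, sub_self]
    linarith
  have := hmin.hasDerivAt_eq_zero (hS.hasDerivAt.sub hφ)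
  linarith

section MixedPartials

variable {v v' : ℝ → ℝ → ℝ} {x t : ℝ}

lemma tendsto_slope_of_continuousAt_partial
    (hv : ∀ᶠ p in 𝓝 (x, t), HasDerivAt (v p.1) (v' p.1 p.2) p.2)
    (hcont : ContinuousAt (uncurry v') (x, t)) :
    Tendsto (fun n : ℝ × ℝ => n.1⁻¹ * (v n.2 (t + n.1) - v n.2 t)) (𝓝[≠] 0 ×ˢ 𝓝 x)
      (𝓝 (v' x t)) := by
  rw [Metric.tendsto_nhds]
  intro ε hε
  obtain ⟨δ, hδ, hnear⟩ := Metric.eventually_nhds_iff.mp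
    (hv.and (Metric.tendsto_nhds.mp hcont (ε / 2) (half_pos hε)))
  have hk : ∀ᶠ k in 𝓝[≠] (0 : ℝ), k ∈ Metric.ball 0 δ ∧ k ≠ 0 :=
    (eventually_nhdsWithin_of_eventually_nhds (Metric.ball_mem_nhds 0 hδ)).and self_mem_nhdsWithin
  filter_upwards [hk.prod_mk (Metric.ball_mem_nhds x hδ)] with ⟨k, y⟩ ⟨⟨hkδ, hk0⟩, hy⟩
  dsimp only at hkδ hk0 hy ⊢
  rw [Metric.mem_ball, Real.dist_0_eq_abs] at hkδ
  have hball : ∀ s ∈ Metric.ball t δ,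
      HasDerivAt (v y) (v' y s) s ∧ dist (v' y s) (v' x t) < ε / 2 :=
    fun s hs => hnear (y := (y, s)) (max_lt hy hs)
  -- mean value inequality for `s ↦ v y s - s * v' x t` on the ball of radius `δ` around `t`
  have hmvt := Convex.norm_image_sub_le_of_norm_hasDerivWithin_le
    (f := fun s => v y s - s * v' x t) (f' := fun s => v' y s - v' x t) (C := ε / 2)
    (s := Metric.ball t δ) (x := t) (y := t + k)
    (fun s hs => (((hball s hs).1.sub ((hasDerivAt_id s).mul_const _)).congr_deriv
      (by simp)).hasDerivWithinAt)
    (fun s hs => (hball s hs).2.le) (convex_ball t δ) (Metric.mem_ball_self hδ)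
    (by simpa using hkδ)
  simp only [Real.norm_eq_abs, add_sub_cancel_left] at hmvt
  rw [Real.dist_eq, show k⁻¹ * (v y (t + k) - v y t) - v' x t
      = k⁻¹ * (v y (t + k) - (t + k) * v' x t - (v y t - t * v' x t)) by field_simp; ring,
    abs_mul, abs_inv, inv_mul_lt_iff₀ (abs_pos.mpr hk0)]
  nlinarith [abs_pos.mpr hk0]

lemma hasDerivAt_of_continuousAt_mixed_partial {u ut : ℝ → ℝ → ℝ}
    (hu : ∀ᶠ p in 𝓝 (x, t), HasDerivAt (u · p.2) (v p.1 p.2) p.1)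
    (hut : ∀ᶠ y in 𝓝 x, HasDerivAt (u y) (ut y t) t)
    (hv : ∀ᶠ p in 𝓝 (x, t), HasDerivAt (v p.1) (v' p.1 p.2) p.2)
    (hcont : ContinuousAt (uncurry v') (x, t)) :
    HasDerivAt (ut · t) (v' x t) x := by
  have hk : Tendsto (fun n : ℝ × ℝ => t + n.1) (𝓝[≠] 0 ×ˢ 𝓝 x) (𝓝 t) := by
    simpa using (tendsto_const_nhds (x := t)).add
      ((tendsto_fst (f := 𝓝[≠] (0 : ℝ)) (g := 𝓝 x)).mono_right nhdsWithin_le_nhds)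
  have hshift : Tendsto (fun n : ℝ × ℝ => (n.2, t + n.1)) (𝓝[≠] 0 ×ˢ 𝓝 x) (𝓝 (x, t)) :=
    tendsto_snd.prodMk_nhds hk
  have hfix : Tendsto (fun n : ℝ × ℝ => (n.2, t)) (𝓝[≠] 0 ×ˢ 𝓝 x) (𝓝 (x, t)) :=
    tendsto_snd.prodMk_nhds tendsto_const_nhds
  refine hasDerivAt_of_tendstoUniformlyOnFilter (l := 𝓝[≠] (0 : ℝ)) (g := (ut · t))
    (g' := (v' · t))
    (f := fun k y => k⁻¹ * (u y (t + k) - u y t)) (f' := fun k y => k⁻¹ * (v y (t + k) - v y t))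
    ?_ ?_ ?_
  · rw [Metric.tendstoUniformlyOnFilter_iff]
    intro ε hε
    have h1 := Metric.tendsto_nhds.mp (tendsto_slope_of_continuousAt_partial hv hcont) (ε / 2)
      (half_pos hε)
    have h2 : ∀ᶠ n : ℝ × ℝ in 𝓝[≠] 0 ×ˢ 𝓝 x, dist (v' n.2 t) (v' x t) < ε / 2 :=
      (tendsto_snd.eventually (Metric.tendsto_nhds.mp
        (ContinuousAt.comp (f := (·, t)) hcont (by fun_prop)) (ε / 2)
        (half_pos hε)))
    filter_upwards [h1, h2] with n hn1 hn2
    calc dist (v' n.2 t) (n.1⁻¹ * (v n.2 (t + n.1) - v n.2 t))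
        ≤ dist (v' n.2 t) (v' x t) + dist (n.1⁻¹ * (v n.2 (t + n.1) - v n.2 t)) (v' x t) :=
          dist_triangle_right _ _ _
      _ < ε := by linarith
  · filter_upwards [hshift.eventually hu, hfix.eventually hu] with n h1 h2
    exact (h1.sub h2).const_mul _
  · filter_upwards [hut] with y hy
    simpa [smul_eq_mul] using (hasDerivAt_iff_tendsto_slope_zero.mp hy)

end MixedPartials

lemma P_periodic (μ : ℝ) : Periodic (P μ) 1 := by
  intro x
  simp only [P, Int.floor_add_one, Int.cast_add, Int.cast_one, add_sub_add_right_eq_sub]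

lemma P_eq_of_mem_Icc {μ z : ℝ} (hz : z ∈ Icc (0 : ℝ) 1) :
    P μ z = √(3/μ) * (exp (2 * √(3/μ) * z) + exp (2 * √(3/μ) * (1 - z))) /
      (exp (2 * √(3/μ)) - 1) := by
  rcases hz.2.lt_or_eq with hz1 | rfl
  · simp [P, Int.floor_eq_zero_iff.mpr ⟨hz.1, hz1⟩]
  · simp only [P, Int.floor_one, Int.cast_one, sub_self, mul_zero, sub_zero, mul_one]
    ring

section Green

variable {h : ℝ → ℝ}

noncomputable def expWindow (c : ℝ) (h : ℝ → ℝ) (x : ℝ) : ℝ :=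
  ∫ y in (x - 1)..x, exp (c * y) * h y

lemma hasDerivAt_expWindow (hh : Continuous h) (hp : Periodic h 1) (c x : ℝ) :
    HasDerivAt (expWindow c h) (exp (c * x) * (1 - exp (-c)) * h x) x := by
  have hf : Continuous fun y => exp (c * y) * h y := by fun_prop
  have hsplit : expWindow c h =
      fun x => (∫ y in (0:ℝ)..x, exp (c * y) * h y) - ∫ y in (0:ℝ)..(x - 1), exp (c * y) * h y := by
    funext x
    exact (integral_interval_sub_left (hf.intervalIntegrable _ _) (hf.intervalIntegrable _ _)).symm
  rw [hsplit]
  refine ((hf.integral_hasStrictDerivAt 0 x).hasDerivAt.sub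
    ((hf.integral_hasStrictDerivAt 0 (x - 1)).hasDerivAt.comp x
      ((hasDerivAt_id x).sub_const 1))).congr_deriv ?_
  rw [hp.sub_eq, mul_sub_one, sub_eq_add_neg (c * x), exp_add]
  ring

/-- With `a = √(3/μ)`, `σ = 1` gives `P∗h` and `σ = -1` its derivative, up to constant factors. -/
noncomputable def expCombo (a σ : ℝ) (h : ℝ → ℝ) (x : ℝ) : ℝ :=
  exp (2 * a * x) * expWindow (-(2 * a)) h x + σ * (exp (2 * a - 2 * a * x) * expWindow (2 * a) h x)

lemma hasDerivAt_expCombo (hh : Continuous h) (hp : Periodic h 1) (a σ x : ℝ) :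
    HasDerivAt (expCombo a σ h)
      (2 * a * expCombo a (-σ) h x + (σ - 1) * (exp (2 * a) - 1) * h x) x := by
  have e1 : HasDerivAt (fun x => exp (2 * a * x)) (exp (2 * a * x) * (2 * a)) x := by
    simpa using ((hasDerivAt_id x).const_mul (2 * a)).exp
  have e2 : HasDerivAt (fun x => exp (2 * a - 2 * a * x))
      (exp (2 * a - 2 * a * x) * -(2 * a)) x := by
    simpa using (((hasDerivAt_id x).const_mul (2 * a)).const_sub (2 * a)).exp
  refine ((e1.fun_mul (hasDerivAt_expWindow hh hp (-(2 * a)) x)).fun_add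
    ((e2.fun_mul (hasDerivAt_expWindow hh hp (2 * a) x)).const_mul σ)).congr_deriv ?_
  have k1 : exp (2 * a * x) * exp (-(2 * a) * x) = 1 := by rw [← exp_add]; ring_nf; simp
  have k2 : exp (2 * a - 2 * a * x) * exp (2 * a * x) = exp (2 * a) := by rw [← exp_add]; ring_nf
  have k3 : exp (2 * a) * exp (-(2 * a)) = 1 := by rw [← exp_add]; ring_nf; simp
  simp only [expCombo, neg_neg]
  linear_combination (1 - exp (2 * a)) * h x * k1 + σ * (1 - exp (-(2 * a))) * h x * k2
    - σ * h x * k3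

lemma pconv_eq_expCombo (hh : Continuous h) (hp : Periodic h 1) (μ x : ℝ) :
    pconv μ h x = √(3/μ) / (exp (2 * √(3/μ)) - 1) * expCombo √(3/μ) 1 h x := by
  set a := √(3/μ) with ha
  have hper : Periodic (fun y => P μ (x - y) * h y) 1 := fun y => by
    simp only [sub_add_eq_sub_sub, hp y, (P_periodic μ).sub_eq]
  have hkernel : EqOn (fun y => P μ (x - y) * h y)
      (fun y => a / (exp (2 * a) - 1) * (exp (2 * a * x) * (exp (-(2 * a) * y) * h y)
        + exp (2 * a - 2 * a * x) * (exp (2 * a * y) * h y))) (uIcc (x - 1) x) := by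
    intro y hy
    rw [uIcc_of_le (by linarith)] at hy
    beta_reduce
    rw [P_eq_of_mem_Icc (z := x - y) ⟨by linarith [hy.2], by linarith [hy.1]⟩, ← ha,
      show 2 * a * (x - y) = 2 * a * x + -(2 * a) * y by ring,
      show 2 * a * (1 - (x - y)) = 2 * a - 2 * a * x + 2 * a * y by ring, exp_add, exp_add]
    ring
  have hW : ∀ c, IntervalIntegrable (fun y => exp (c * y) * h y) volume (x - 1) x :=
    fun c => (by fun_prop : Continuous fun y => exp (c * y) * h y).intervalIntegrable _ _
  calc pconv μ h x = ∫ y in (x - 1)..x, P μ (x - y) * h y := by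
        simpa [pconv] using (hper.intervalIntegral_add_eq (x - 1) 0).symm
    _ = _ := by
        rw [integral_congr hkernel, intervalIntegral.integral_const_mul,
          intervalIntegral.integral_add ((hW _).const_mul _) ((hW _).const_mul _),
          intervalIntegral.integral_const_mul, intervalIntegral.integral_const_mul]
        simp only [expCombo, expWindow, one_mul]

lemma hasDerivAt_deriv_pconv (hμ : 0 < μ) (hh : Continuous h) (hp : Periodic h 1) (x : ℝ) :
    HasDerivAt (deriv (pconv μ h)) (12/μ * (pconv μ h x - h x)) x := by
  set a := √(3/μ)
  have hE : a / (exp (2 * a) - 1) * (exp (2 * a) - 1) = a :=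
    div_mul_cancel₀ a (sub_pos.mpr (one_lt_exp_iff.mpr (by positivity))).ne'
  have ha2 : a ^ 2 = 3/μ := Real.sq_sqrt (by positivity)
  have hpconv : pconv μ h = fun x => a / (exp (2 * a) - 1) * expCombo a 1 h x :=
    funext (pconv_eq_expCombo hh hp μ)
  have hderiv :
      deriv (pconv μ h) = fun x => a / (exp (2 * a) - 1) * (2 * a * expCombo a (-1) h x) := by
    funext y
    rw [hpconv]
    simpa using ((hasDerivAt_expCombo hh hp a 1 y).const_mul (a / (exp (2 * a) - 1))).deriv
  rw [hderiv, hpconv]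
  refine (((hasDerivAt_expCombo hh hp a (-1) x).const_mul (2 * a)).const_mul _).congr_deriv ?_
  rw [neg_neg, show 12/μ = 4 * a ^ 2 by rw [ha2]; ring]
  linear_combination (-4 * a * h x) * hE

end Green

lemma periodic_gfun {ε μ : ℝ} {w w' : ℝ → ℝ} {c : ℝ} (hw : Periodic w c) (hw' : Periodic w' c) :
    Periodic (gfun ε μ w w') c := fun x => by
  simp only [gfun, hw x, hw' x]

lemma continuous_gfun {ε μ : ℝ} {w w' : ℝ → ℝ} (hw : Continuous w) (hw' : Continuous w') :
    Continuous (gfun ε μ w w') := by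
  unfold gfun
  fun_prop

namespace QLSol

variable {ε μ T : ℝ} (sol : QLSol ε μ T) {t : ℝ}

lemma continuous_u (ht : t ∈ Ico 0 T) : Continuous (sol.u · t) :=
  continuous_iff_continuousAt.mpr fun x => (sol.hux x t ht).continuousAt

lemma continuous_ux (ht : t ∈ Ico 0 T) : Continuous (sol.ux · t) :=
  continuous_iff_continuousAt.mpr fun x => (sol.huxx x t ht).continuousAt

lemma periodic_ux (ht : t ∈ Ico 0 T) : Periodic (sol.ux · t) 1 :=
  periodic_of_hasDerivAt (sol.periodic t ht) fun x => sol.hux x t ht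

lemma ux_le_sSup (ht : t ∈ Ico 0 T) (x : ℝ) : sol.ux x t ≤ sSup (range (sol.ux · t)) :=
  le_csSup ((sol.periodic_ux ht).isBounded_of_continuous one_ne_zero
    (sol.continuous_ux ht)).bddAbove (mem_range_self x)

lemma locallyLipschitzOn_sSup_ux :
    LocallyLipschitzOn (Ioo 0 T) fun t => sSup (range (sol.ux · t)) := by
  intro t ht
  have hsub : Icc (t / 2) ((t + T) / 2) ⊆ Ico 0 T := fun s hs =>
    ⟨by linarith [hs.1, ht.1], by linarith [hs.2, ht.2]⟩
  obtain ⟨C, hC⟩ := (isCompact_Icc.prod isCompact_Icc).exists_bound_of_continuousOn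
    (sol.contutx.mono (prod_mono (subset_univ (Icc (0 : ℝ) 1)) hsub))
  refine ⟨C.toNNReal, Icc (t / 2) ((t + T) / 2),
    nhdsWithin_le_nhds (Icc_mem_nhds (by linarith [ht.1]) (by linarith [ht.2])), ?_⟩
  refine lipschitzOnWith_sSup_range (A := Icc 0 1) (fun s hs => ?_) fun ξ hξ => ?_
  · exact (sol.periodic_ux (hsub hs)).exists_mem_Icc_forall_le one_pos (sol.continuous_ux (hsub hs))
  · refine (convex_Icc _ _).lipschitzOnWith_of_nnnorm_hasDerivWithin_le
      (fun s hs => (sol.hutx ξ s (hsub hs)).mono hsub) fun s hs => ?_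
    rw [← NNReal.coe_le_coe, coe_nnnorm, Real.coe_toNNReal']
    exact le_max_of_le_left (hC (ξ, s) ⟨hξ, hs⟩)

lemma hasDerivAt_ut_of_utx (ht : t ∈ Ioo 0 T) (x : ℝ) :
    HasDerivAt (sol.ut · t) (sol.utx x t) x := by
  have hopen : ∀ᶠ p : ℝ × ℝ in 𝓝 (x, t), p.2 ∈ Ioo 0 T :=
    continuous_snd.continuousAt.eventually_mem (isOpen_Ioo.mem_nhds ht)
  have hIco : ∀ {s}, s ∈ Ioo 0 T → Ico 0 T ∈ 𝓝 s := fun hs =>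
    mem_of_superset (isOpen_Ioo.mem_nhds hs) Ioo_subset_Ico_self
  refine hasDerivAt_of_continuousAt_mixed_partial (u := sol.u)
    (hopen.mono fun p hp => sol.hux p.1 p.2 (Ioo_subset_Ico_self hp))
    (Eventually.of_forall fun y => (sol.hut y t (Ioo_subset_Ico_self ht)).hasDerivAt (hIco ht))
    (hopen.mono fun p hp => (sol.hutx p.1 p.2 (Ioo_subset_Ico_self hp)).hasDerivAt (hIco hp))
    ((sol.contutx.continuousAt (prod_mem_nhds univ_mem
      (mem_of_superset (isOpen_Ioo.mem_nhds ht) Ioo_subset_Ico_self))))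

lemma hasDerivAt_ut_of_eqn (hμ : 0 < μ) (ht : t ∈ Ico 0 T) (x : ℝ) :
    HasDerivAt (sol.ut · t)
      (sol.uxx x t + 7/2 * ε * (sol.ux x t * sol.ux x t + sol.u x t * sol.uxx x t)
        - 12/μ * (pconv μ (gfun ε μ (sol.u · t) (sol.ux · t)) x
          - gfun ε μ (sol.u · t) (sol.ux · t) x)) x := by
  have hg := hasDerivAt_deriv_pconv hμ
    (continuous_gfun (ε := ε) (μ := μ) (sol.continuous_u ht) (sol.continuous_ux ht))
    (periodic_gfun (sol.periodic t ht) (sol.periodic_ux ht)) x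
  have hut : (sol.ut · t) = fun y => sol.ux y t + 7/2 * ε * (sol.u y t * sol.ux y t)
      - deriv (pconv μ (gfun ε μ (sol.u · t) (sol.ux · t))) y :=
    funext fun y => by linear_combination sol.eqn y t ht
  rw [hut]
  exact ((sol.huxx x t ht).add (((sol.hux x t ht).mul (sol.huxx x t ht)).const_mul _)).sub hg

end QLSol

theorem stmt10_general (ε μ T : ℝ) (hμ : 0 < μ)
    (sol : QLSol ε μ T) (S : ℝ → ℝ)
    (hS : ∀ t, S t = sSup (Set.range fun x => sol.ux x t)) :
    ∀ᵐ t ∂MeasureTheory.volume, t ∈ Set.Ioo (0:ℝ) T →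
      DifferentiableAt ℝ S t ∧
      ∀ ξ : ℝ, sol.ux ξ t = S t →
        deriv S t - (7/2) * ε * (S t)^2
          = -(12/μ) * pconv μ (gfun ε μ (fun x' => sol.u x' t) (fun x' => sol.ux x' t)) ξ
            + (12/μ) * gfun ε μ (fun x' => sol.u x' t) (fun x' => sol.ux x' t) ξ := by
  obtain rfl : S = fun t => sSup (range (sol.ux · t)) := funext hS
  filter_upwards [sol.locallyLipschitzOn_sSup_ux.ae_differentiableAt_of_mem isOpen_Ioo]
    with t hdiff ht
  refine ⟨hdiff ht, fun ξ hξ => ?_⟩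
  have ht' : t ∈ Ico 0 T := Ioo_subset_Ico_self ht
  have hIco : Ico 0 T ∈ 𝓝 t := mem_of_superset (isOpen_Ioo.mem_nhds ht) Ioo_subset_Ico_self
  -- envelope (Danskin) argument: `ux ξ ·` touches the supremum from below at `t`
  have hderivS : deriv (fun t => sSup (range (sol.ux · t))) t = sol.utx ξ t :=
    deriv_eq_of_eventually_le_of_eq (hdiff ht) ((sol.hutx ξ t ht').hasDerivAt hIco)
      (mem_of_superset hIco fun s hs => sol.ux_le_sSup hs ξ) hξ
  have huxx : sol.uxx ξ t = 0 :=
    IsLocalMax.hasDerivAt_eq_zero (Eventually.of_forall fun x => hξ ▸ sol.ux_le_sSup ht' x)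
      (sol.huxx ξ t ht')
  have hutx := (sol.hasDerivAt_ut_of_utx ht ξ).unique (sol.hasDerivAt_ut_of_eqn hμ ht' ξ)
  rw [hderivS, hutx, huxx, ← hξ]
  ring

/-- Evolution of the maximal slope: for a.e. `t ∈ (0,T)`, `S(t) = sup_x u_x(x,t)` is
differentiable at `t` and at any maximizer `ξ(t)` of `u_x(·,t)` one has
`S'(t) - (7/2)ε S(t)² = -(12/μ)(P∗g(u))(ξ(t)) + (12/μ)g(u)(ξ(t))`. -/
theorem stmt10 (ε μ T : ℝ) (hε : 0 < ε) (hμ : 0 < μ) (hT : 0 < T)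
    (sol : QLSol ε μ T) (S : ℝ → ℝ)
    (hS : ∀ t, S t = sSup (Set.range fun x => sol.ux x t)) :
    ∀ᵐ t ∂MeasureTheory.volume, t ∈ Set.Ioo (0:ℝ) T →
      DifferentiableAt ℝ S t ∧
      ∀ ξ : ℝ, sol.ux ξ t = S t →
        deriv S t - (7/2) * ε * (S t)^2
          = -(12/μ) * pconv μ (gfun ε μ (fun x' => sol.u x' t) (fun x' => sol.ux x' t)) ξ
            + (12/μ) * gfun ε μ (fun x' => sol.u x' t) (fun x' => sol.ux x' t) ξ :=
  stmt10_general ε μ T hμ sol S hS
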